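/- arXiv:2405.04439 — 5 statements merged into one kernel-verified Lean document; each statement's English description precedes it below -/
import Mathlib

section
/- The identity e^{-(x+y)²/(2t)}/√(2πt) = ∫₀ᵗ (x/√(2πs³)) e^{-x²/(2s)} · e^{-y²/(2(t-s))}/√(2π(t-s)) ds holds for all x, y > 0 and t > 0. -/
/-!
The integrand has an explicit primitive. Let `p_t` be the heat kernel, `Φ` the primitive of the
standard normal density vanishing at `0` and `r_c(s) = (c s - x t) / √(t s (t - s))`. Since
`r_{x±y}(s)² = x²/s + y²/(t-s) - (x±y)²/t`, both products `p_t(x±y) · e^{-r_{x±y}(s)²/2}` equal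
`e^{-x²/(2s)} e^{-y²/(2(t-s))} / √(2πt)`, and `r_{x+y}' + r_{x-y}' = x t / (s √(t s (t-s)))`; hence
`F = p_t(x+y) Φ(r_{x+y}) + p_t(x-y) Φ(r_{x-y})` has the integrand as derivative on `(0, t)`.
As `s` runs from `0` to `t`, `r_{x+y}` goes from `-∞` to `+∞` while `r_{x-y}` starts and ends at
`-∞`, so the integral is `p_t(x+y)`. The integrand is nonnegative, so its integrability comes for
free from the bounded primitive.
-/

open Real MeasureTheory intervalIntegral Filter Set Topology

theorem integral_eq_sub_of_hasDerivAt_of_nonneg_of_tendsto {f f' : ℝ → ℝ} {a b fa fb : ℝ}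
    (hab : a < b) (hderiv : ∀ x ∈ Ioo a b, HasDerivAt f (f' x) x)
    (hpos : ∀ x ∈ Ioo a b, 0 ≤ f' x)
    (ha : Tendsto f (𝓝[>] a) (𝓝 fa)) (hb : Tendsto f (𝓝[<] b) (𝓝 fb)) :
    ∫ x in a..b, f' x = fb - fa := by
  have hf : ContinuousOn f (Ioo a b) := fun x hx => (hderiv x hx).continuousAt.continuousWithinAt
  have hext : EqOn (extendFrom (Ioo a b) f) f (Ioo a b) := extendFrom_extends hf
  have hint : IntegrableOn f' (Ioc a b) := by
    refine integrableOn_deriv_of_nonneg (g := extendFrom (Ioo a b) f)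
      (continuousOn_Icc_extendFrom_Ioo hf ha hb) (fun x hx => ?_) hpos
    refine (hderiv x hx).congr_of_eventuallyEq ?_
    filter_upwards [Ioo_mem_nhds hx.1 hx.2] using hext
  exact integral_eq_sub_of_hasDerivAt_of_tendsto hab hderiv
    ((intervalIntegrable_iff_integrableOn_Ioc_of_le hab.le).2 hint) ha hb

noncomputable def heatKernel (t y : ℝ) : ℝ := exp (-y^2 / (2*t)) / √(2*π*t)

noncomputable def firstPassageDensity (x s : ℝ) : ℝ := x / √(2*π*s^3) * exp (-x^2 / (2*s))

noncomputable def stdNormalPrimitive (z : ℝ) : ℝ := ∫ u in (0:ℝ)..z, exp (-u^2/2) / √(2*π)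

lemma hasDerivAt_stdNormalPrimitive (z : ℝ) :
    HasDerivAt stdNormalPrimitive (exp (-z^2/2) / √(2*π)) z :=
  (Continuous.integral_hasStrictDerivAt (by fun_prop) 0 z).hasDerivAt

lemma stdNormalPrimitive_neg (z : ℝ) : stdNormalPrimitive (-z) = -stdNormalPrimitive z := by
  simp only [stdNormalPrimitive]
  rw [integral_symm, ← neg_zero, ← integral_comp_neg]
  simp

lemma exp_neg_sq_div_two_eq (u : ℝ) : exp (-u^2/2) = exp (-(1/2) * u^2) := by
  ring_nf

lemma integrable_exp_neg_sq_div_two : Integrable fun u : ℝ => exp (-u^2/2) / √(2*π) := by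
  simp only [exp_neg_sq_div_two_eq]
  exact (integrable_exp_neg_mul_sq (by norm_num)).div_const _

lemma integral_Ioi_exp_neg_sq_div_two : ∫ u in Ioi (0:ℝ), exp (-u^2/2) / √(2*π) = 1/2 := by
  have h2π : √(2*π) ≠ 0 := by positivity
  simp only [exp_neg_sq_div_two_eq, MeasureTheory.integral_div, integral_gaussian_Ioi]
  field_simp

lemma tendsto_stdNormalPrimitive_atTop : Tendsto stdNormalPrimitive atTop (𝓝 (1/2)) := by
  rw [← integral_Ioi_exp_neg_sq_div_two]
  exact intervalIntegral_tendsto_integral_Ioi 0 integrable_exp_neg_sq_div_two.integrableOn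
    tendsto_id

lemma tendsto_stdNormalPrimitive_atBot : Tendsto stdNormalPrimitive atBot (𝓝 (-(1/2))) := by
  refine ((tendsto_stdNormalPrimitive_atTop.comp tendsto_neg_atBot_atTop).neg).congr fun z => ?_
  simp [stdNormalPrimitive_neg]

noncomputable def gaussArg (x t c s : ℝ) : ℝ := (c*s - x*t) / √(t*s*(t-s))

section
variable {x t s : ℝ}

lemma pos_of_mem_Ioo_zero (hs : s ∈ Ioo 0 t) : 0 < s ∧ 0 < t - s ∧ 0 < t :=
  ⟨hs.1, sub_pos.2 hs.2, hs.1.trans hs.2⟩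

lemma mul_mul_sub_pos (hs : s ∈ Ioo 0 t) : 0 < t*s*(t-s) := by
  obtain ⟨_, _, _⟩ := pos_of_mem_Ioo_zero hs
  positivity

lemma hasDerivAt_gaussArg (c : ℝ) (hs : s ∈ Ioo 0 t) :
    HasDerivAt (gaussArg x t c) (t^2 * (x*t + (c - 2*x)*s) / (2 * √(t*s*(t-s))^3)) s := by
  have hp := mul_mul_sub_pos hs
  have hpoly : HasDerivAt (fun u => t*u*(t-u)) (t*(t - 2*s)) s :=
    (((hasDerivAt_id s).const_mul t).mul ((hasDerivAt_id s).const_sub t)).congr_deriv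
      (by simp; ring)
  have hnum : HasDerivAt (fun u => c*u - x*t) c s := by
    simpa using ((hasDerivAt_id s).const_mul c).sub_const (x*t)
  refine (hnum.div (hpoly.sqrt hp.ne') (by positivity)).congr_deriv ?_
  have hq2 : √(t*s*(t-s))^2 = t*s*(t-s) := sq_sqrt hp.le
  have hq : √(t*s*(t-s)) ≠ 0 := by positivity
  field_simp
  linear_combination 2 * c * hq2

lemma sq_gaussArg (y : ℝ) (hs : s ∈ Ioo 0 t) :
    gaussArg x t (x+y) s ^ 2 = x^2/s + y^2/(t-s) - (x+y)^2/t := by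
  obtain ⟨_, _, _⟩ := pos_of_mem_Ioo_zero hs
  rw [gaussArg, div_pow, sq_sqrt (mul_mul_sub_pos hs).le]
  field_simp
  ring

lemma heatKernel_mul_exp_gaussArg (y : ℝ) (hs : s ∈ Ioo 0 t) :
    heatKernel t (x+y) * (exp (-gaussArg x t (x+y) s ^ 2 / 2) / √(2*π)) =
      exp (-x^2 / (2*s)) * exp (-y^2 / (2*(t-s))) / (√(2*π*t) * √(2*π)) := by
  obtain ⟨_, _, _⟩ := pos_of_mem_Ioo_zero hs
  rw [heatKernel, sq_gaussArg y hs, ← exp_add, div_mul_div_comm, ← exp_add]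
  congr 2
  field_simp
  ring

lemma gaussArg_deriv_add (y : ℝ) (hs : s ∈ Ioo 0 t) :
    t^2 * (x*t + (x+y - 2*x)*s) / (2 * √(t*s*(t-s))^3) +
      t^2 * (x*t + (x-y - 2*x)*s) / (2 * √(t*s*(t-s))^3) = x*t / (s * √(t*s*(t-s))) := by
  obtain ⟨_, _, _⟩ := pos_of_mem_Ioo_zero hs
  have hq2 : √(t*s*(t-s))^2 = t*s*(t-s) := sq_sqrt (mul_mul_sub_pos hs).le
  have hq : √(t*s*(t-s)) ≠ 0 := by positivity
  field_simp
  linear_combination (-2*x) * hq2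

lemma tendsto_inv_sqrt_atTop {a : ℝ} (ha : t*a*(t-a) = 0) :
    Tendsto (fun s => (√(t*s*(t-s)))⁻¹) (𝓝[Ioo 0 t] a) atTop := by
  refine tendsto_inv_nhdsGT_zero.comp (tendsto_nhdsWithin_iff.2 ⟨?_, ?_⟩)
  · have hcont : Continuous fun s => √(t*s*(t-s)) := by fun_prop
    simpa [ha] using (hcont.tendsto a).mono_left nhdsWithin_le_nhds
  · filter_upwards [self_mem_nhdsWithin] with s hs using sqrt_pos.2 (mul_mul_sub_pos hs)

lemma tendsto_gaussArg_atTop {a c : ℝ} (ha : t*a*(t-a) = 0) (hc : 0 < c*a - x*t) :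
    Tendsto (gaussArg x t c) (𝓝[Ioo 0 t] a) atTop :=
  ((by fun_prop : Continuous fun s => c*s - x*t).continuousWithinAt.pos_mul_atTop hc
    (tendsto_inv_sqrt_atTop ha)).congr fun _ => (div_eq_mul_inv _ _).symm

lemma tendsto_gaussArg_atBot {a c : ℝ} (ha : t*a*(t-a) = 0) (hc : c*a - x*t < 0) :
    Tendsto (gaussArg x t c) (𝓝[Ioo 0 t] a) atBot :=
  ((by fun_prop : Continuous fun s => c*s - x*t).continuousWithinAt.neg_mul_atTop hc
    (tendsto_inv_sqrt_atTop ha)).congr fun _ => (div_eq_mul_inv _ _).symm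

end

noncomputable def convolutionPrimitive (x y t s : ℝ) : ℝ :=
  heatKernel t (x+y) * stdNormalPrimitive (gaussArg x t (x+y) s) +
    heatKernel t (x-y) * stdNormalPrimitive (gaussArg x t (x-y) s)

section
variable {x y t s : ℝ}

lemma hasDerivAt_convolutionPrimitive (hs : s ∈ Ioo 0 t) :
    HasDerivAt (convolutionPrimitive x y t) (firstPassageDensity x s * heatKernel (t-s) y) s := by
  have h₁ := ((hasDerivAt_stdNormalPrimitive _).comp s
    (hasDerivAt_gaussArg (x := x) (x+y) hs)).const_mul (heatKernel t (x+y))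
  have h₂ := ((hasDerivAt_stdNormalPrimitive _).comp s
    (hasDerivAt_gaussArg (x := x) (x-y) hs)).const_mul (heatKernel t (x-y))
  refine (h₁.add h₂).congr_deriv ?_
  have e₁ := heatKernel_mul_exp_gaussArg (x := x) y hs
  have e₂ := heatKernel_mul_exp_gaussArg (x := x) (-y) hs
  rw [← sub_eq_add_neg, neg_sq] at e₂
  rw [← mul_assoc, ← mul_assoc, e₁, e₂, ← mul_add, gaussArg_deriv_add y hs]
  obtain ⟨_, _, _⟩ := pos_of_mem_Ioo_zero hs
  have hnorm : √(2*π*s^3) * √(2*π*(t-s)) * t = √(2*π*t) * √(2*π) * s * √(t*s*(t-s)) := by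
    rw [← sq_eq_sq₀ (by positivity) (by positivity)]
    simp (disch := positivity) only [mul_pow, sq_sqrt]
    ring
  unfold firstPassageDensity heatKernel
  field_simp at hnorm ⊢
  linear_combination x * hnorm

lemma tendsto_convolutionPrimitive_nhdsGT_zero (hx : 0 < x) (ht : 0 < t) :
    Tendsto (convolutionPrimitive x y t) (𝓝[>] 0)
      (𝓝 (heatKernel t (x+y) * -(1/2) + heatKernel t (x-y) * -(1/2))) := by
  have hneg : ∀ c, Tendsto (gaussArg x t c) (𝓝[Ioo 0 t] 0) atBot := fun _ =>
    tendsto_gaussArg_atBot (by ring) (by nlinarith)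
  rw [← nhdsWithin_Ioo_eq_nhdsGT ht]
  exact ((tendsto_stdNormalPrimitive_atBot.comp (hneg _)).const_mul _).add
    ((tendsto_stdNormalPrimitive_atBot.comp (hneg _)).const_mul _)

lemma tendsto_convolutionPrimitive_nhdsLT (hy : 0 < y) (ht : 0 < t) :
    Tendsto (convolutionPrimitive x y t) (𝓝[<] t)
      (𝓝 (heatKernel t (x+y) * (1/2) + heatKernel t (x-y) * -(1/2))) := by
  have h₁ : Tendsto (gaussArg x t (x+y)) (𝓝[Ioo 0 t] t) atTop :=
    tendsto_gaussArg_atTop (by ring) (by nlinarith)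
  have h₂ : Tendsto (gaussArg x t (x-y)) (𝓝[Ioo 0 t] t) atBot :=
    tendsto_gaussArg_atBot (by ring) (by nlinarith)
  rw [← nhdsWithin_Ioo_eq_nhdsLT ht]
  exact ((tendsto_stdNormalPrimitive_atTop.comp h₁).const_mul _).add
    ((tendsto_stdNormalPrimitive_atBot.comp h₂).const_mul _)

end

/-- The convolution identity for the Gaussian heat kernel at distance `x + y`:
`e^{-(x+y)²/(2t)}/√(2πt) = ∫₀ᵗ (x/√(2πs³)) e^{-x²/(2s)} · e^{-y²/(2(t-s))}/√(2π(t-s)) ds`. -/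
theorem heat_kernel_first_passage_convolution
    (x y t : ℝ) (hx : 0 < x) (hy : 0 < y) (ht : 0 < t) :
    Real.exp (-(x + y)^2 / (2*t)) / Real.sqrt (2 * π * t) =
      ∫ s in (0:ℝ)..t,
        (x / Real.sqrt (2 * π * s^3)) * Real.exp (-x^2 / (2*s)) *
          (Real.exp (-y^2 / (2*(t - s))) / Real.sqrt (2 * π * (t - s))) := by
  show heatKernel t (x+y) = ∫ s in (0:ℝ)..t, firstPassageDensity x s * heatKernel (t-s) y
  have hnonneg : ∀ s ∈ Ioo 0 t, 0 ≤ firstPassageDensity x s * heatKernel (t-s) y := by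
    intro s _
    unfold firstPassageDensity heatKernel
    positivity
  rw [integral_eq_sub_of_hasDerivAt_of_nonneg_of_tendsto ht
    (fun s hs => hasDerivAt_convolutionPrimitive hs) hnonneg
    (tendsto_convolutionPrimitive_nhdsGT_zero hx ht) (tendsto_convolutionPrimitive_nhdsLT hy ht)]
  ring
end

section
/- Let u_λ solve (1/2)u'' = λu on the N-legged spider where leg 1 has length L with u(L) = 1 at its endpoint, legs 2,…,N are infinite half-lines on which u is bounded, with continuity and Kirchhoff conditions at the origin. Then u(0) = 1/(cosh(√(2λ)L) + (N-1)sinh(√(2λ)L)) = (2/N)·e^{-√(2λ)L}/(1 - ((N-2)/N)e^{-2√(2λ)L}). -/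
open Real Set Filter

/-! On each leg `(1/2)u'' = λu` reads `u'' = μ²u` with `μ = √(2λ)`, so
`u(x) = u(0) cosh(μx) + u'(0)/μ · sinh(μx)`. Boundedness on an infinite leg kills the `e^{μx}`
mode, i.e. `u'(0) = -μ u(0)`; by continuity all these legs share `u(0)`, so Kirchhoff gives
`u'(0) = (N-1)μ u(0)` on the finite leg, and `u(L) = 1` becomes
`u(0) (cosh(μL) + (N-1) sinh(μL)) = 1`. -/

theorem eq_mul_exp_of_deriv_eq {f : ℝ → ℝ} {μ x : ℝ} (hx : 0 ≤ x) (hf : Differentiable ℝ f)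
    (hder : ∀ y ∈ Icc 0 x, deriv f y = μ * f y) :
    f x = f 0 * exp (μ * x) := by
  have hconst : ∀ y ∈ Icc 0 x, f y * exp (-(μ * y)) = f 0 * exp (-(μ * 0)) := by
    refine constant_of_has_deriv_right_zero (hf.continuous.mul (by fun_prop)).continuousOn
      fun y hy => ?_
    have hfy : HasDerivAt f (μ * f y) y := hder y (Ico_subset_Icc_self hy) ▸ (hf y).hasDerivAt
    have hexp : HasDerivAt (fun y => exp (-(μ * y))) (exp (-(μ * y)) * -(μ * 1)) y :=
      ((hasDerivAt_id y).const_mul μ).neg.exp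
    convert (hfy.fun_mul hexp).hasDerivWithinAt using 1
    ring
  have hx' := hconst x ⟨hx, le_rfl⟩
  rw [mul_zero, neg_zero, exp_zero, mul_one, exp_neg, ← div_eq_mul_inv, div_eq_iff (exp_ne_zero _)]
    at hx'
  exact hx'

theorem eq_cosh_add_sinh_of_deriv_deriv_eq {f : ℝ → ℝ} {μ x : ℝ} (hμ : μ ≠ 0) (hx : 0 ≤ x)
    (hf : Differentiable ℝ f) (hf' : Differentiable ℝ (deriv f))
    (hder : ∀ y ∈ Icc 0 x, deriv (deriv f) y = μ ^ 2 * f y) :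
    f x = f 0 * cosh (μ * x) + deriv f 0 / μ * sinh (μ * x) := by
  -- `f' ± μf` solve the first-order equations `g' = ±μg`.
  have hplus : deriv f x + μ * f x = (deriv f 0 + μ * f 0) * exp (μ * x) := by
    refine eq_mul_exp_of_deriv_eq hx (hf'.add (hf.const_mul μ)) fun y hy => ?_
    rw [deriv_add (hf' y) ((hf y).const_mul μ), deriv_const_mul μ (hf y), hder y hy, Pi.add_apply]
    ring
  have hminus : deriv f x - μ * f x = (deriv f 0 - μ * f 0) * exp (-μ * x) := by
    refine eq_mul_exp_of_deriv_eq hx (hf'.sub (hf.const_mul μ)) fun y hy => ?_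
    rw [deriv_sub (hf' y) ((hf y).const_mul μ), deriv_const_mul μ (hf y), hder y hy, Pi.sub_apply]
    ring
  have hfx : f x = ((deriv f x + μ * f x) - (deriv f x - μ * f x)) / (2 * μ) := by
    field_simp
    ring
  rw [hfx, hplus, hminus, cosh_eq, sinh_eq, neg_mul]
  field_simp
  ring

theorem eq_zero_of_abs_mul_exp_add_mul_exp_le {a b μ C : ℝ} (hμ : 0 < μ)
    (hbdd : ∀ x ≥ 0, |a * exp (μ * x) + b * exp (-(μ * x))| ≤ C) : a = 0 := by
  have hgrowth : ∀ x ≥ 0, |a| * exp (μ * x) ≤ C + |b| := by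
    intro x hx
    have hdecay : |b * exp (-(μ * x))| ≤ |b| := by
      rw [abs_mul, abs_of_pos (exp_pos _)]
      exact mul_le_of_le_one_right (abs_nonneg b) (exp_le_one_iff.mpr (by nlinarith))
    rw [← abs_of_pos (exp_pos (μ * x)), ← abs_mul]
    calc |a * exp (μ * x)|
        = |(a * exp (μ * x) + b * exp (-(μ * x))) - b * exp (-(μ * x))| := by ring_nf
      _ ≤ |a * exp (μ * x) + b * exp (-(μ * x))| + |b * exp (-(μ * x))| := abs_sub _ _
      _ ≤ C + |b| := add_le_add (hbdd x hx) hdecay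
  by_contra ha
  have htend : Tendsto (fun x => |a| * exp (μ * x)) atTop atTop :=
    (tendsto_exp_atTop.comp (tendsto_id.const_mul_atTop hμ)).const_mul_atTop (abs_pos.mpr ha)
  obtain ⟨x, hxC, hx⟩ := ((htend.eventually_gt_atTop (C + |b|)).and (eventually_ge_atTop 0)).exists
  exact (hgrowth x hx).not_gt hxC

theorem deriv_eq_neg_mul_of_bounded {f : ℝ → ℝ} {μ : ℝ} (hμ : 0 < μ) (hf : Differentiable ℝ f)
    (hf' : Differentiable ℝ (deriv f)) (hder : ∀ x ∈ Ici 0, deriv (deriv f) x = μ ^ 2 * f x)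
    (hbdd : ∃ C, ∀ x ∈ Ici 0, |f x| ≤ C) :
    deriv f 0 = -(μ * f 0) := by
  obtain ⟨C, hC⟩ := hbdd
  have hgrowing : (f 0 + deriv f 0 / μ) / 2 = 0 := by
    refine eq_zero_of_abs_mul_exp_add_mul_exp_le (b := (f 0 - deriv f 0 / μ) / 2) (C := C) hμ
      fun x hx => ?_
    have hfx := eq_cosh_add_sinh_of_deriv_deriv_eq hμ.ne' hx hf hf' fun y hy => hder y hy.1
    rw [cosh_eq, sinh_eq] at hfx
    convert hC x hx using 2
    rw [hfx]
    ring
  field_simp at hgrowing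
  linarith

theorem apply_eq_card_sub_one_mul_of_sum_eq_zero {ι : Type*} [Fintype ι]
    {d : ι → ℝ} {c : ℝ} (i₀ : ι) (hd : ∀ i ≠ i₀, d i = -c) (hsum : ∑ i, d i = 0) :
    d i₀ = (Fintype.card ι - 1) * c := by
  classical
  have hshift : ∀ i, d i + c = if i = i₀ then d i₀ + c else 0 := by
    intro i
    split_ifs with hi
    · rw [hi]
    · rw [hd i hi, neg_add_cancel]
  have := Finset.sum_congr rfl fun i (_ : i ∈ Finset.univ) => hshift i
  rw [Finset.sum_ite_eq', Finset.sum_add_distrib, hsum, Finset.sum_const, Finset.card_univ,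
    nsmul_eq_mul, if_pos (Finset.mem_univ i₀)] at this
  linarith

theorem cosh_add_mul_sinh_eq_div {n : ℝ} (hn : n ≠ 0) (t : ℝ) :
    cosh t + (n - 1) * sinh t = (1 - (n - 2) / n * exp (-(2 * t))) / (2 / n * exp (-t)) := by
  have hexp : exp (-(2 * t)) = exp (-t) * exp (-t) := by rw [← exp_add]; ring_nf
  have hprod : exp t * exp (-t) = 1 := by rw [← exp_add, add_neg_cancel, exp_zero]
  rw [hexp, cosh_eq, sinh_eq, eq_div_iff (by positivity)]
  field_simp
  linear_combination n * hprod

theorem spider_hitting_one_leg_general (N : ℕ) (L lam : ℝ) (hL : 0 < L) (hlam : 0 < lam)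
    (i₀ : Fin N) (u : Fin N → ℝ → ℝ)
    (hC2 : ∀ i, ContDiff ℝ 2 (u i))
    (hODE0 : ∀ x ∈ Icc (0:ℝ) L, (1/2) * deriv (deriv (u i₀)) x = lam * u i₀ x)
    (hODE : ∀ i, i ≠ i₀ → ∀ x ∈ Ici (0:ℝ), (1/2) * deriv (deriv (u i)) x = lam * u i x)
    (hbdd : ∀ i, i ≠ i₀ → ∃ C, ∀ x ∈ Ici (0:ℝ), |u i x| ≤ C)
    (hbdry : u i₀ L = 1)
    (hcont : ∀ i j, u i 0 = u j 0)
    (hKirchhoff : ∑ i : Fin N, deriv (u i) 0 = 0) :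
    u i₀ 0 = 1 / (Real.cosh (Real.sqrt (2*lam) * L)
        + (N - 1 : ℝ) * Real.sinh (Real.sqrt (2*lam) * L)) ∧
      u i₀ 0 = (2 / N) * Real.exp (-(Real.sqrt (2*lam) * L)) /
        (1 - ((N - 2 : ℝ) / N) * Real.exp (-(2 * (Real.sqrt (2*lam) * L)))) := by
  set μ := √(2 * lam)
  have hμ : 0 < μ := sqrt_pos.mpr (by linarith)
  have hμsq : μ ^ 2 = 2 * lam := sq_sqrt (by linarith)
  have hinfinite : ∀ i ≠ i₀, deriv (u i) 0 = -(μ * u i₀ 0) := fun i hi => by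
    rw [deriv_eq_neg_mul_of_bounded hμ ((hC2 i).differentiable two_ne_zero)
      (hC2 i).differentiable_deriv_two (fun x hx => by rw [hμsq]; linarith [hODE i hi x hx])
      (hbdd i hi), hcont i i₀]
  have hfinite_deriv : deriv (u i₀) 0 = (N - 1) * (μ * u i₀ 0) := by
    simpa using apply_eq_card_sub_one_mul_of_sum_eq_zero i₀ hinfinite hKirchhoff
  have hfinite := eq_cosh_add_sinh_of_deriv_deriv_eq hμ.ne' hL.le
    ((hC2 i₀).differentiable two_ne_zero) (hC2 i₀).differentiable_deriv_two
    (fun x hx => by rw [hμsq]; linarith [hODE0 x hx])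
  rw [hbdry, hfinite_deriv, mul_div_assoc, mul_div_cancel_left₀ _ hμ.ne'] at hfinite
  have hvalue : u i₀ 0 = 1 / (cosh (μ * L) + (N - 1) * sinh (μ * L)) :=
    eq_one_div_of_mul_eq_one_left (by linear_combination -hfinite)
  refine ⟨hvalue, ?_⟩
  rw [hvalue, cosh_add_mul_sinh_eq_div (Nat.cast_ne_zero.mpr i₀.pos.ne'), one_div_div]

/-- Spider with one finite leg of length `L` (boundary value `1` there) and `N-1` infinite legs
on which the solution of `(1/2)u'' = λu` is bounded; with continuity and Kirchhoff conditions
at the origin the value at the origin is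
`1/(cosh(√(2λ)L) + (N-1)sinh(√(2λ)L)) = (2/N) e^{-√(2λ)L}/(1 - ((N-2)/N) e^{-2√(2λ)L})`. -/
theorem spider_hitting_one_leg (N : ℕ) (hN : 2 ≤ N) (L lam : ℝ) (hL : 0 < L) (hlam : 0 < lam)
    (i₀ : Fin N) (u : Fin N → ℝ → ℝ)
    (hC2 : ∀ i, ContDiff ℝ 2 (u i))
    (hODE0 : ∀ x ∈ Icc (0:ℝ) L, (1/2) * deriv (deriv (u i₀)) x = lam * u i₀ x)
    (hODE : ∀ i, i ≠ i₀ → ∀ x ∈ Ici (0:ℝ), (1/2) * deriv (deriv (u i)) x = lam * u i x)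
    (hbdd : ∀ i, i ≠ i₀ → ∃ C, ∀ x ∈ Ici (0:ℝ), |u i x| ≤ C)
    (hbdry : u i₀ L = 1)
    (hcont : ∀ i j, u i 0 = u j 0)
    (hKirchhoff : ∑ i : Fin N, deriv (u i) 0 = 0) :
    u i₀ 0 = 1 / (Real.cosh (Real.sqrt (2*lam) * L)
        + (N - 1 : ℝ) * Real.sinh (Real.sqrt (2*lam) * L)) ∧
      u i₀ 0 = (2 / N) * Real.exp (-(Real.sqrt (2*lam) * L)) /
        (1 - ((N - 2 : ℝ) / N) * Real.exp (-(2 * (Real.sqrt (2*lam) * L)))) :=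
  spider_hitting_one_leg_general N L lam hL hlam i₀ u hC2 hODE0 hODE hbdd hbdry hcont hKirchhoff
end

section
/- For N ≥ 2, λ > 0, L > 0, the identity 1/(cosh(√(2λ)L) + (N-1)sinh(√(2λ)L)) = Σ_{n=0}^∞ (2/N)(1 - 2/N)^n e^{-(2n+1)√(2λ)L} holds, the series converging absolutely. -/
open Real

/-!
Writing `r = q e^{-2x}`, the series is `p e^{-x} ∑ rⁿ = p / (eˣ - q e^{-x})`, and with
`p = 2/N`, `q = 1 - 2/N` one has
`cosh x + (N-1) sinh x = (N eˣ - (N-2) e^{-x}) / 2 = (eˣ - q e^{-x}) / p`.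
-/

theorem Real.hasSum_mul_pow_mul_exp_neg_odd_mul {p q x : ℝ} (hr : |q * exp (-(2 * x))| < 1) :
    HasSum (fun n : ℕ => p * q ^ n * exp (-((2 * n + 1 : ℝ) * x)))
      (p / (exp x - q * exp (-x))) := by
  have hterm : ∀ n : ℕ, p * q ^ n * exp (-((2 * n + 1 : ℝ) * x)) =
      p * exp (-x) * (q * exp (-(2 * x))) ^ n := by
    intro n
    rw [show -((2 * n + 1 : ℝ) * x) = -x + n * -(2 * x) by ring, exp_add, exp_nat_mul, mul_pow]
    ring
  have hden : exp x - q * exp (-x) = exp x * (1 - q * exp (-(2 * x))) := by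
    rw [mul_sub, ← mul_assoc, mul_comm (exp x) q, mul_assoc, ← exp_add]
    ring_nf
  rw [hden, div_mul_eq_div_div, div_eq_mul_inv _ (1 - _), div_eq_mul_inv p, ← exp_neg]
  simp only [hterm]
  exact (hasSum_geometric_of_abs_lt_one hr).mul_left _

theorem Real.one_div_cosh_add_mul_sinh {a : ℝ} (ha : a ≠ 0) (x : ℝ) :
    1 / (cosh x + (a - 1) * sinh x) = (2 / a) / (exp x - (1 - 2 / a) * exp (-x)) := by
  rw [cosh_eq, sinh_eq]
  field_simp
  ring

theorem spider_hitting_laplace_geometric_series_general (N : ℕ) (hN : 2 ≤ N) (lam L : ℝ)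
    (hL : 0 < L) :
    1 / (Real.cosh (Real.sqrt (2*lam) * L)
        + (N - 1 : ℝ) * Real.sinh (Real.sqrt (2*lam) * L)) =
      (∑' n : ℕ, (2 / N) * (1 - 2 / N)^n *
        Real.exp (-((2 * n + 1 : ℝ) * (Real.sqrt (2*lam) * L)))) ∧
      Summable (fun n : ℕ => |(2 / N) * (1 - 2 / N : ℝ)^n *
        Real.exp (-((2 * n + 1 : ℝ) * (Real.sqrt (2*lam) * L)))|) := by
  set x := Real.sqrt (2 * lam) * L
  have hx : 0 ≤ x := mul_nonneg (sqrt_nonneg _) hL.le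
  have hN' : (2 : ℝ) ≤ N := by exact_mod_cast hN
  have hq : 0 ≤ 1 - 2 / (N : ℝ) := by rw [sub_nonneg, div_le_one (by linarith)]; exact hN'
  have hr : |(1 - 2 / (N : ℝ)) * exp (-(2 * x))| < 1 := by
    rw [abs_of_nonneg (by positivity)]
    exact mul_lt_one_of_nonneg_of_lt_one_left hq
      (by linarith [show (0 : ℝ) < 2 / N by positivity]) (exp_le_one_iff.mpr (by linarith))
  have hsum := hasSum_mul_pow_mul_exp_neg_odd_mul (p := 2 / N) hr
  rw [one_div_cosh_add_mul_sinh (by positivity)]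
  exact ⟨hsum.tsum_eq.symm, hsum.summable.abs⟩

/-- For `N ≥ 2`, `λ > 0`, `L > 0`:
`1/(cosh(√(2λ)L) + (N-1)sinh(√(2λ)L)) = Σ_{n≥0} (2/N)(1 - 2/N)^n e^{-(2n+1)√(2λ)L}`,
and the series converges absolutely. -/
theorem spider_hitting_laplace_geometric_series (N : ℕ) (hN : 2 ≤ N) (lam L : ℝ)
    (hlam : 0 < lam) (hL : 0 < L) :
    1 / (Real.cosh (Real.sqrt (2*lam) * L)
        + (N - 1 : ℝ) * Real.sinh (Real.sqrt (2*lam) * L)) =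
      (∑' n : ℕ, (2 / N) * (1 - 2 / N)^n *
        Real.exp (-((2 * n + 1 : ℝ) * (Real.sqrt (2*lam) * L)))) ∧
      Summable (fun n : ℕ => |(2 / N) * (1 - 2 / N : ℝ)^n *
        Real.exp (-((2 * n + 1 : ℝ) * (Real.sqrt (2*lam) * L)))|) :=
  spider_hitting_laplace_geometric_series_general N hN lam L hL
end

section
/- Let u_{α,β}(x) = ∫₀^∞ e^{-αt} E_x[e^{-β∫₀^t 1_{[0,∞)}(b(s))ds}] dt for standard 1-D Brownian motion b; then u_{α,β} solves (1/2)u'' - (α+β)u = -1 on (0,∞) and (1/2)u'' - αu = -1 on (-∞,0), and the bounded continuous solution with continuous derivative at 0 satisfies u_{α,β}(0) = 1/√(α(α+β)). -/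
/-!
Since `deriv` returns `0` where a function is not differentiable, the equation
`(1/2) u'' - κ u = -1` only forces `u'` to be differentiable at points where `u ≠ 1/κ`.
Between two zeros of `u - 1/κ` there is a zero of `u'` (Rolle), so on any interval free of
zeros of `u'` the function `u'` is differentiable off at most one point and is the integral of
`2κ (u - 1/κ)`; choosing such intervals ending at a given point shows that `u'` is
differentiable everywhere on the half-line after all. Thus `w = u - 1/κ` solves `w'' = 2κ w`,
`w' + √(2κ) w` grows like `exp (√(2κ) x)` and `w' - √(2κ) w` decays, and boundedness of `u`
kills the growing mode. The resulting two conditions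
`u'(0) = -√(2(α+β)) (u(0) - 1/(α+β))` and `u'(0) = √(2α) (u(0) - 1/α)` determine `u(0)`.
-/

open Real Set Filter Topology

theorem exists_mem_uIcc_eq_and_ne_on_uIoo {g : ℝ → ℝ} (hg : Continuous g) (x y : ℝ) :
    ∃ z ∈ uIcc x y, g z = g x ∧ ∀ w ∈ uIoo z y, g w ≠ g x := by
  have hK : IsCompact (uIcc x y ∩ {w | g w = g x}) :=
    isCompact_uIcc.inter_right (isClosed_eq hg continuous_const)
  obtain ⟨z, ⟨hz, hgz⟩, hmin⟩ :=
    hK.exists_isMinOn ⟨x, left_mem_uIcc, rfl⟩ (f := fun w => |w - y|) (by fun_prop)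
  refine ⟨z, hz, hgz, fun w hw hgw => ?_⟩
  have hwI : w ∈ uIcc x y := uIcc_subset_uIcc hz right_mem_uIcc (uIoo_subset_uIcc_self hw)
  have hle : |z - y| ≤ |w - y| := hmin ⟨hwI, hgw⟩
  rcases le_total z y with h | h <;>
    simp only [uIoo, mem_Ioo, inf_eq_left.2, sup_eq_right.2, inf_eq_right.2, sup_eq_left.2, h]
      at hw <;>
    grind

theorem hasDerivAt_deriv_of_ne_zero {f : ℝ → ℝ} {μ x : ℝ} (hμ : μ ≠ 0)
    (h : deriv (deriv f) x = μ * f x) (hx : f x ≠ 0) : HasDerivAt (deriv f) (μ * f x) x := by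
  have hd : DifferentiableAt ℝ (deriv f) x := by
    by_contra hnd
    rw [deriv_zero_of_not_differentiableAt hnd] at h
    exact hx ((mul_eq_zero.1 h.symm).resolve_left hμ)
  exact h ▸ hd.hasDerivAt

theorem deriv_sub_deriv_eq_integral {f : ℝ → ℝ} {μ a b : ℝ} (hμ : μ ≠ 0)
    (hf : Differentiable ℝ f) (hf' : Continuous (deriv f))
    (h : ∀ z ∈ uIoo a b, deriv (deriv f) z = μ * f z) (hne : ∀ z ∈ uIoo a b, deriv f z ≠ 0) :
    deriv f b - deriv f a = ∫ z in a..b, μ * f z := by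
  have hzeros : {z ∈ uIoo a b | f z = 0}.Subsingleton := by
    intro z₁ hz₁ z₂ hz₂
    by_contra hz
    obtain ⟨c, hc, hextr⟩ :=
      exists_isLocalExtr_uIoo hz hf.continuous.continuousOn (hz₁.2.trans hz₂.2.symm)
    exact hne c (uIoo_subset_uIcc_self.trans (ordConnected_Ioo.uIcc_subset hz₁.1 hz₂.1) hc)
      hextr.deriv_eq_zero
  refine (MeasureTheory.integral_eq_of_hasDerivAt_off_countable _ _ hzeros.countable
    hf'.continuousOn ?_ ((continuous_const.mul hf.continuous).intervalIntegrable _ _)).symm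
  exact fun z hz => hasDerivAt_deriv_of_ne_zero hμ (h z hz.1) fun h0 => hz.2 ⟨hz.1, h0⟩

theorem hasDerivAt_deriv_of_deriv_deriv_eq_mul {f : ℝ → ℝ} {μ x : ℝ} {U : Set ℝ} (hμ : μ ≠ 0)
    (hf : Differentiable ℝ f) (hf' : Continuous (deriv f)) (hU : IsOpen U)
    (h : ∀ z ∈ U, deriv (deriv f) z = μ * f z) (hx : x ∈ U) :
    HasDerivAt (deriv f) (μ * f x) x := by
  obtain hfx | hfx := ne_or_eq (f x) 0
  · exact hasDerivAt_deriv_of_ne_zero hμ (h x hx) hfx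
  rw [hfx, mul_zero, hasDerivAt_iff_isLittleO, Asymptotics.isLittleO_iff]
  intro ε hε
  have hμf : Tendsto (fun z => μ * f z) (𝓝 x) (𝓝 0) := by
    simpa [hfx] using (hf.continuous.tendsto x).const_mul μ
  have hnear : ∀ᶠ z in 𝓝 x, z ∈ U ∧ ‖μ * f z‖ ≤ ε ∧ (deriv f x ≠ 0 → deriv f z ≠ 0) := by
    refine Filter.Eventually.and (hU.mem_nhds hx)
      ((hμf.norm.eventually (eventually_le_nhds (by simpa using hε))).and ?_)
    by_cases hg : deriv f x = 0
    · exact Eventually.of_forall fun _ h => absurd hg h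
    · exact (hf'.continuousAt.eventually_ne hg).mono fun _ h _ => h
  obtain ⟨r, hr, hball⟩ := Metric.eventually_nhds_iff_ball.1 hnear
  have hconv : OrdConnected (Metric.ball x r) := (convex_ball x r).ordConnected
  filter_upwards [Metric.ball_mem_nhds x hr] with y hy
  -- `z` is the last point before `y` where `deriv f` returns to its value at `x`
  obtain ⟨z, hz, hgz, hne⟩ :
      ∃ z ∈ uIcc x y, deriv f z = deriv f x ∧ ∀ w ∈ uIoo z y, deriv f w ≠ 0 := by
    by_cases hg : deriv f x = 0
    · obtain ⟨z, hz, hgz, hne⟩ := exists_mem_uIcc_eq_and_ne_on_uIoo hf' x y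
      exact ⟨z, hz, hgz, hg ▸ hne⟩
    · refine ⟨x, left_mem_uIcc, rfl, fun w hw => (hball w ?_).2.2 hg⟩
      exact hconv.uIcc_subset (Metric.mem_ball_self hr) hy (uIoo_subset_uIcc_self hw)
  have hzy : uIcc z y ⊆ Metric.ball x r :=
    hconv.uIcc_subset (hconv.uIcc_subset (Metric.mem_ball_self hr) hy hz) hy
  calc ‖deriv f y - deriv f x - (y - x) • (0 : ℝ)‖ = ‖∫ w in z..y, μ * f w‖ := by
        rw [smul_zero, sub_zero, ← hgz, deriv_sub_deriv_eq_integral hμ hf hf'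
          (fun w hw => h w (hball w (hzy (uIoo_subset_uIcc_self hw))).1) hne]
    _ ≤ ε * |y - z| := intervalIntegral.norm_integral_le_of_norm_le_const
        fun w hw => (hball w (hzy (uIoc_subset_uIcc hw))).2.1
    _ ≤ ε * ‖y - x‖ := by
        gcongr
        exact abs_sub_le_of_uIcc_subset_uIcc (uIcc_subset_uIcc hz right_mem_uIcc)

theorem eqOn_mul_exp_of_hasDerivAt {f : ℝ → ℝ} {k : ℝ} (hc : ContinuousOn f (Ici 0))
    (hd : ∀ y > 0, HasDerivAt f (k * f y) y) : EqOn f (fun x => f 0 * exp (k * x)) (Ici 0) := by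
  intro x hx
  rcases (mem_Ici.1 hx).eq_or_lt with rfl | hx
  · simp
  have hconst : ∀ y > 0, HasDerivAt (fun y => f y * exp (-(k * y))) 0 y := fun y hy =>
    ((hd y hy).mul (((hasDerivAt_id' y).const_mul k).neg.exp)).congr_deriv (by ring)
  obtain ⟨c, -, hc0⟩ := exists_hasDerivAt_eq_slope (fun y => f y * exp (-(k * y))) (fun _ => 0) hx
    ((hc.mono Icc_subset_Ici_self).mul (by fun_prop))
    fun y hy => hconst y hy.1
  have : f x * exp (-(k * x)) = f 0 := by
    simpa [sub_eq_zero, hx.ne'] using hc0.symm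
  show f x = f 0 * exp (k * x)
  rw [← this, mul_assoc, ← exp_add, neg_add_cancel, exp_zero, mul_one]

theorem eq_zero_of_abs_mul_exp_le {A γ M : ℝ} (hγ : 0 < γ)
    (h : ∀ x ≥ 0, |A| * exp (γ * x) ≤ M) : A = 0 := by
  by_contra hA
  have hA' : 0 < |A| := abs_pos.2 hA
  have hM : 0 ≤ M := le_trans (by positivity) (h 0 le_rfl)
  have hx : 0 ≤ M / (|A| * γ) := by positivity
  have hbound := h _ hx
  have hexp := add_one_le_exp (γ * (M / (|A| * γ)))
  have hval : |A| * (γ * (M / (|A| * γ)) + 1) = M + |A| := by field_simp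
  nlinarith

theorem deriv_eq_neg_sqrt_mul_of_bounded {w w' : ℝ → ℝ} {μ C : ℝ} (hμ : 0 < μ)
    (hw : ∀ x, HasDerivAt w (w' x) x) (hw' : Continuous w')
    (hw'' : ∀ x > 0, HasDerivAt w' (μ * w x) x) (hC : ∀ x ≥ 0, |w x| ≤ C) :
    w' 0 = -√μ * w 0 := by
  set γ := √μ
  have hγ : 0 < γ := sqrt_pos.2 hμ
  have hγμ : γ ^ 2 = μ := sq_sqrt hμ.le
  have hwc : Continuous w := continuous_iff_continuousAt.2 fun x => (hw x).continuousAt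
  have ha := eqOn_mul_exp_of_hasDerivAt (f := fun x => w' x + γ * w x) (k := γ) (by fun_prop)
    fun x hx => ((hw'' x hx).add ((hw x).const_mul γ)).congr_deriv (by rw [← hγμ]; ring)
  have hb := eqOn_mul_exp_of_hasDerivAt (f := fun x => w' x - γ * w x) (k := -γ) (by fun_prop)
    fun x hx => ((hw'' x hx).sub ((hw x).const_mul γ)).congr_deriv (by rw [← hγμ]; ring)
  suffices w' 0 + γ * w 0 = 0 by linarith
  refine eq_zero_of_abs_mul_exp_le hγ (M := |w' 0 - γ * w 0| + 2 * γ * C) fun x hx => ?_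
  have hax : w' x + γ * w x = (w' 0 + γ * w 0) * exp (γ * x) := ha hx
  have hbx : w' x - γ * w x = (w' 0 - γ * w 0) * exp (-γ * x) := hb hx
  have hdecay : exp (-γ * x) ≤ 1 := exp_le_one_iff.2 (by nlinarith)
  calc |w' 0 + γ * w 0| * exp (γ * x) = |(w' x - γ * w x) + 2 * γ * w x| := by
        rw [← abs_exp, ← abs_mul, ← hax]; ring_nf
    _ ≤ |w' x - γ * w x| + 2 * γ * |w x| := by
        grw [abs_add_le, abs_mul, abs_mul, abs_two, abs_of_pos hγ]
    _ ≤ |w' 0 - γ * w 0| + 2 * γ * C := by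
        grw [hbx, abs_mul, abs_exp, hdecay, hC x hx, mul_one]

theorem deriv_eq_sqrt_mul_of_bounded {w w' : ℝ → ℝ} {μ C : ℝ} (hμ : 0 < μ)
    (hw : ∀ x, HasDerivAt w (w' x) x) (hw' : Continuous w')
    (hw'' : ∀ x < 0, HasDerivAt w' (μ * w x) x) (hC : ∀ x ≤ 0, |w x| ≤ C) :
    w' 0 = √μ * w 0 := by
  have := deriv_eq_neg_sqrt_mul_of_bounded (w := fun x => w (-x)) (w' := fun x => -w' (-x)) hμ
    (fun x => ((hw (-x)).comp x (hasDerivAt_neg x)).congr_deriv (by ring)) (by fun_prop)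
    (fun x hx => ((hw'' (-x) (by linarith)).comp x (hasDerivAt_neg x)).neg.congr_deriv (by ring))
    fun x hx => hC (-x) (by linarith)
  simpa using this

theorem hasDerivAt_deriv_of_resolvent_eq {u : ℝ → ℝ} {κ x : ℝ} {U : Set ℝ} (hκ : κ ≠ 0)
    (hu : Differentiable ℝ u) (hu' : Continuous (deriv u)) (hU : IsOpen U)
    (h : ∀ z ∈ U, (1 / 2) * deriv (deriv u) z - κ * u z = -1) (hx : x ∈ U) :
    HasDerivAt (deriv u) (2 * κ * (u x - κ⁻¹)) x := by
  have hshift : deriv (fun z => u z - κ⁻¹) = deriv u := funext fun z => deriv_sub_const ..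
  have := hasDerivAt_deriv_of_deriv_deriv_eq_mul (f := fun z => u z - κ⁻¹) (μ := 2 * κ)
    (mul_ne_zero two_ne_zero hκ) (hu.sub_const _) (hshift ▸ hu') hU
    (fun z hz => by rw [hshift]; field_simp; linarith [h z hz]) hx
  rwa [hshift] at this

theorem eq_one_div_sqrt_mul_of_slopes_match {κ₁ κ₂ v : ℝ} (hκ₁ : 0 < κ₁) (hκ₂ : 0 < κ₂)
    (h : -√(2 * κ₁) * (v - κ₁⁻¹) = √(2 * κ₂) * (v - κ₂⁻¹)) : v = 1 / √(κ₂ * κ₁) := by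
  set p := √(2 * κ₁)
  set q := √(2 * κ₂)
  have hp : p ^ 2 = 2 * κ₁ := sq_sqrt (by positivity)
  have hq : q ^ 2 = 2 * κ₂ := sq_sqrt (by positivity)
  have hpq : √(κ₂ * κ₁) = p * q / 2 := by
    rw [sqrt_eq_iff_mul_self_eq_of_pos (by positivity)]
    linear_combination (q ^ 2 * hp + 2 * κ₁ * hq) / 4
  have hp' : p ^ 2 * κ₁⁻¹ = 2 := by rw [hp]; field_simp
  have hq' : q ^ 2 * κ₂⁻¹ = 2 := by rw [hq]; field_simp
  have hv : (v * p * q - 2) * (p + q) = 0 := by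
    linear_combination -(p * q) * h + p * hq' + q * hp'
  rw [hpq, eq_div_iff (by positivity)]
  linear_combination (mul_eq_zero.1 hv).resolve_right (by positivity) / 2

/-- The unique bounded `C¹` function on `ℝ` solving `(1/2)u'' - (α+β)u = -1` on `(0,∞)` and
`(1/2)u'' - αu = -1` on `(-∞,0)` satisfies `u(0) = 1/√(α(α+β))`. -/
theorem arcsine_resolvent_at_zero (α β : ℝ) (hα : 0 < α) (hβ : 0 < β)
    (u : ℝ → ℝ)
    (hdiff : Differentiable ℝ u)
    (hderiv_cont : Continuous (deriv u))
    (hbdd : ∃ C, ∀ x, |u x| ≤ C)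
    (hODEpos : ∀ x ∈ Ioi (0:ℝ), (1/2) * deriv (deriv u) x - (α + β) * u x = -1)
    (hODEneg : ∀ x ∈ Iio (0:ℝ), (1/2) * deriv (deriv u) x - α * u x = -1) :
    u 0 = 1 / Real.sqrt (α * (α + β)) := by
  obtain ⟨C, hC⟩ := hbdd
  have habs (c x : ℝ) : |u x - c| ≤ C + |c| := (abs_sub _ _).trans (by grw [hC x])
  have hR : deriv u 0 = -√(2 * (α + β)) * (u 0 - (α + β)⁻¹) :=
    deriv_eq_neg_sqrt_mul_of_bounded (w := fun x => u x - (α + β)⁻¹) (by positivity)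
      (fun x => (hdiff x).hasDerivAt.sub_const _) hderiv_cont
      (fun x hx => hasDerivAt_deriv_of_resolvent_eq (by positivity) hdiff hderiv_cont isOpen_Ioi
        hODEpos hx) fun x _ => habs _ x
  have hL : deriv u 0 = √(2 * α) * (u 0 - α⁻¹) :=
    deriv_eq_sqrt_mul_of_bounded (w := fun x => u x - α⁻¹) (by positivity)
      (fun x => (hdiff x).hasDerivAt.sub_const _) hderiv_cont
      (fun x hx => hasDerivAt_deriv_of_resolvent_eq (by positivity) hdiff hderiv_cont isOpen_Iio
        hODEneg hx) fun x _ => habs _ x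
  exact eq_one_div_sqrt_mul_of_slopes_match (by positivity) hα (hR.symm.trans hL)
end

section
/- Let N ≥ 1 and 1 ≤ N₀ ≤ N. Consider the N-legged spider problem: find bounded functions uᵢ(x) = cᵢ e^{-√(2(α+β))x} + 1/(α+β) on legs i = 1,…,N₀ and uⱼ(x) = cⱼ e^{-√(2α)x} + 1/(2α)·2 on legs j = N₀+1,…,N (i.e. solving (1/2)u'' - (α+β)u = -1 and (1/2)u'' - αu = -1 respectively), subject to continuity and Kirchhoff conditions at the origin. Then with z = β/α, the common value at the origin is u(0) = (1/α)·(1/√(1+z))·(N₀ + (N-N₀)√(1+z))/((N-N₀) + N₀√(1+z)). -/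
open Real Set

/-! Each leg has the form `uᵢ(x) = cᵢ e^{-kᵢ x} + dᵢ`, so `uᵢ(0) = cᵢ + dᵢ` and `uᵢ'(0) = -kᵢ cᵢ`:
continuity and the Kirchhoff condition make the common value `v` at the origin the `k`-weighted
mean of the levels `dᵢ`. Writing `a = √(2α)` and `s = √(1 + β/α)`, the rates are `a s` on the first
`N₀` legs and `a` on the others, and the levels `1/(α s²)` and `1/α`, so
`v (N₀ s + (N - N₀)) = (1/α) (N₀/s + (N - N₀))`. -/

theorem value_mul_sum_rate_of_kirchhoff {ι : Type*} [Fintype ι] (u : ι → ℝ → ℝ)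
    (c k d : ι → ℝ) (hu : ∀ i, u i = fun x => c i * exp (-(k i * x)) + d i)
    (hcont : ∀ i j, u i 0 = u j 0) (hKirchhoff : ∑ i, deriv (u i) 0 = 0) (i₀ : ι) :
    u i₀ 0 * ∑ i, k i = ∑ i, k i * d i := by
  have hc : ∀ i, c i = u i₀ 0 - d i := fun i => by
    have h := hcont i i₀
    rw [hu i] at h
    simp only [mul_zero, neg_zero, exp_zero, mul_one] at h
    linarith
  have hderiv : ∀ i, deriv (u i) 0 = -(c i * k i) := fun i => by
    have := (((hasDerivAt_id (0 : ℝ)).const_mul (k i)).neg.exp.const_mul (c i)).add_const (d i)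
    simpa [hu] using this.deriv
  simp only [hderiv, hc, Finset.sum_neg_distrib, neg_eq_zero, sub_mul,
    Finset.sum_sub_distrib] at hKirchhoff
  simp only [Finset.mul_sum, mul_comm (k _)]
  linear_combination hKirchhoff

theorem Fin.sum_ite_val_lt {M : Type*} [AddCommMonoid M] {m n : ℕ} (h : m ≤ n) (x y : M) :
    ∑ i : Fin n, (if (i : ℕ) < m then x else y) = m • x + (n - m) • y := by
  obtain ⟨l, rfl⟩ := Nat.exists_eq_add_of_le h
  rw [Fin.sum_univ_eq_sum_range (fun i => if i < m then x else y), Finset.sum_range_add,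
    Finset.sum_ite_of_true fun i hi => Finset.mem_range.mp hi]
  simp

theorem eq_div_of_kirchhoff_balance {a s m n q v : ℝ} (ha : 0 < a) (hs : 0 < s)
    (hden : 0 < n + m * s)
    (h : v * (m * (a * s) + n * a) = m * (a * s * (q / s ^ 2)) + n * (a * q)) :
    v = q * (1 / s) * (m + n * s) / (n + m * s) := by
  rw [eq_div_iff hden.ne']
  refine mul_right_cancel₀ (mul_pos ha hs).ne' ?_
  linear_combination (norm := skip) s * h
  field_simp
  ring

theorem spider_occupation_time_resolvent_general (N N₀ : ℕ) (hN : N₀ ≤ N)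
    (α β : ℝ) (hα : 0 < α) (hβ : 0 < β)
    (c : Fin N → ℝ) (u : Fin N → ℝ → ℝ)
    (hu : ∀ i : Fin N, ∀ x : ℝ,
      u i x = if (i : ℕ) < N₀ then
          c i * Real.exp (-(Real.sqrt (2 * (α + β)) * x)) + 1 / (α + β)
        else c i * Real.exp (-(Real.sqrt (2 * α) * x)) + 1 / α)
    (hcont : ∀ i j, u i 0 = u j 0)
    (hKirchhoff : ∑ i : Fin N, deriv (u i) 0 = 0) :
    ∀ i, u i 0 = (1 / α) * (1 / Real.sqrt (1 + β / α)) *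
      ((N₀ : ℝ) + ((N : ℝ) - N₀) * Real.sqrt (1 + β / α)) /
        (((N : ℝ) - N₀) + (N₀ : ℝ) * Real.sqrt (1 + β / α)) := by
  intro i₀
  set s := √(1 + β / α)
  have hs : 0 < s := sqrt_pos.mpr (by positivity)
  have hrate : √(2 * (α + β)) = √(2 * α) * s := by
    rw [← sqrt_mul (by positivity)]
    congr 1
    field_simp
  have hlevel : 1 / (α + β) = 1 / α / s ^ 2 := by
    rw [sq_sqrt (by positivity)]
    field_simp
  have hbal := value_mul_sum_rate_of_kirchhoff u c
    (fun i => if (i : ℕ) < N₀ then √(2 * (α + β)) else √(2 * α))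
    (fun i => if (i : ℕ) < N₀ then 1 / (α + β) else 1 / α)
    (fun i => funext fun x => by rw [hu]; split_ifs <;> rfl) hcont hKirchhoff i₀
  simp only [ite_mul_ite, Fin.sum_ite_val_lt hN, nsmul_eq_mul, Nat.cast_sub hN] at hbal
  have hden : 0 < ((N : ℝ) - N₀) + N₀ * s := by
    rcases N₀.eq_zero_or_pos with h | h
    · simpa [h] using i₀.pos
    · have : (N₀ : ℝ) ≤ N := by exact_mod_cast hN
      have : (0 : ℝ) < N₀ := by exact_mod_cast h
      nlinarith
  rw [hrate, hlevel] at hbal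
  exact eq_div_of_kirchhoff_balance (sqrt_pos.mpr (by positivity)) hs hden hbal

/-- Generalized arcsine law on the spider: bounded solutions
`uᵢ(x) = cᵢ e^{-√(2(α+β))x} + 1/(α+β)` on the first `N₀` legs and
`uⱼ(x) = cⱼ e^{-√(2α)x} + 1/α` on the remaining `N - N₀` legs, glued by continuity and the
Kirchhoff condition at the origin, satisfy (with `z = β/α`)
`u(0) = (1/α)(1/√(1+z))(N₀ + (N-N₀)√(1+z))/((N-N₀) + N₀√(1+z))`. -/
theorem spider_occupation_time_resolvent (N N₀ : ℕ) (hN₀ : 1 ≤ N₀) (hN : N₀ ≤ N)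
    (α β : ℝ) (hα : 0 < α) (hβ : 0 < β)
    (c : Fin N → ℝ) (u : Fin N → ℝ → ℝ)
    (hu : ∀ i : Fin N, ∀ x : ℝ,
      u i x = if (i : ℕ) < N₀ then
          c i * Real.exp (-(Real.sqrt (2 * (α + β)) * x)) + 1 / (α + β)
        else c i * Real.exp (-(Real.sqrt (2 * α) * x)) + 1 / α)
    (hcont : ∀ i j, u i 0 = u j 0)
    (hKirchhoff : ∑ i : Fin N, deriv (u i) 0 = 0) :
    ∀ i, u i 0 = (1 / α) * (1 / Real.sqrt (1 + β / α)) *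
      ((N₀ : ℝ) + ((N : ℝ) - N₀) * Real.sqrt (1 + β / α)) /
        (((N : ℝ) - N₀) + (N₀ : ℝ) * Real.sqrt (1 + β / α)) :=
  spider_occupation_time_resolvent_general N N₀ hN α β hα hβ c u hu hcont hKirchhoff
end
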